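/- arXiv:2310.08818 — 2 statements merged into one kernel-verified Lean document; each statement's English description precedes it below -/
import Mathlib

section
/- Let n ≥ 2 be an integer, let d_1, …, d_{n−1} be positive real numbers, let t_2, …, t_{n−1} be real numbers each satisfying t_j ≤ 0 or t_j ≥ 1, and let λ̄_1, …, λ̄_{n−1} be real numbers. If B_j^− ≤ λ̄_j ≤ B_j^+ for every 1 ≤ j ≤ n−1 (with the data-bounded initialization B_1^− = −d_1, B_1^+ = d_1), then for every s ∈ [0,1] one has 0 ≤ S_n(s) ≤ 1. -/
/-!
Write `S_n(s) = s + s(s-1)/d_1 · U_1(s)`, where `U_m = λ̄_m + (s - t_{m+1})/d_{m+1} · U_{m+1}` is the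
Horner tail of the Newton form. Downward induction shows `B_m^- ≤ U_m(s) ≤ B_m^+`: the bounds are
built so that `c/d_{m+1} · U_{m+1} ∈ [B_m^- - λ̄_m, B_m^+ - λ̄_m]` for `c = 1 - t_{m+1}` or
`c = -t_{m+1}`, and `(s - t_{m+1})/c ∈ [0,1]` shrinks that interval, which contains `0`, into itself.
At `m = 1` this gives `|U_1(s)| ≤ d_1`, and `s + s(s-1)v ∈ [s², 2s - s²] ⊆ [0,1]` for `|v| ≤ 1`.
-/

/-- The expanded normalized Newton form
`S_n(s) = s + Σ_{j=1}^{n−1} (λ̄_j / (d_1⋯d_j)) · s·(s−1) · Π_{k=2}^{j} (s − t_k)`. -/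
noncomputable def Sn (n : ℕ) (d t lam : ℕ → ℝ) (s : ℝ) : ℝ :=
  s + ∑ j ∈ Finset.Icc 1 (n - 1),
    (lam j / ∏ k ∈ Finset.Icc 1 j, d k) * (s * (s - 1)) * ∏ k ∈ Finset.Icc 2 j, (s - t k)

open Finset

section OrderedField

variable {K : Type*} [Field K] [LinearOrder K] [IsStrictOrderedRing K]

theorem add_mul_mem_Icc {lam a b x y : K} (hlam : lam ∈ Set.Icc a b) (hx : x ∈ Set.Icc 0 1)
    (hy : y ∈ Set.Icc (a - lam) (b - lam)) : lam + x * y ∈ Set.Icc a b := by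
  have h0 : (0 : K) ∈ Set.Icc (a - lam) (b - lam) := ⟨by linarith [hlam.1], by linarith [hlam.2]⟩
  have hxy := (convex_Icc (a - lam) (b - lam)).smul_mem_of_zero_mem h0 hy hx
  rw [smul_eq_mul] at hxy
  exact ⟨by linarith [hxy.1], by linarith [hxy.2]⟩

theorem mul_mem_Icc_of_pos {k u a b : K} (hk : 0 < k) (hu : u ∈ Set.Icc (a / k) (b / k)) :
    k * u ∈ Set.Icc a b :=
  ⟨(div_le_iff₀' hk).1 hu.1, (le_div_iff₀' hk).1 hu.2⟩

theorem mul_mem_Icc_of_neg {k u a b : K} (hk : k < 0) (hu : u ∈ Set.Icc (b / k) (a / k)) :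
    k * u ∈ Set.Icc a b :=
  ⟨(le_div_iff_of_neg' hk).1 hu.2, (div_le_iff_of_neg' hk).1 hu.1⟩

theorem add_div_mul_mem_Icc {lam a b c d s t u : K} (hc : c ≠ 0) (hlam : lam ∈ Set.Icc a b)
    (hx : (s - t) / c ∈ Set.Icc 0 1) (hy : c / d * u ∈ Set.Icc (a - lam) (b - lam)) :
    lam + (s - t) / d * u ∈ Set.Icc a b := by
  have h : (s - t) / d * u = (s - t) / c * (c / d * u) := by field_simp
  rw [h]
  exact add_mul_mem_Icc hlam hx hy

theorem newton_step_mem_Icc {lam a b a' b' d s t u : K} (hd : 0 < d) (hs : s ∈ Set.Icc 0 1)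
    (hlam : lam ∈ Set.Icc a b) (ht : t ≤ 0 ∨ 1 ≤ t)
    (hB : (t ≤ 0 → a' = (a - lam) * d / (1 - t) ∧ b' = (b - lam) * d / (1 - t)) ∧
      (1 ≤ t → a' = (b - lam) * d / (-t) ∧ b' = (a - lam) * d / (-t)))
    (hu : u ∈ Set.Icc a' b') : lam + (s - t) / d * u ∈ Set.Icc a b := by
  rcases ht with ht | ht
  · obtain ⟨rfl, rfl⟩ := hB.1 ht
    have hc : 0 < 1 - t := by linarith
    refine add_div_mul_mem_Icc hc.ne' hlam ⟨?_, ?_⟩ (mul_mem_Icc_of_pos (div_pos hc hd) ?_)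
    · exact div_nonneg (by linarith [hs.1]) hc.le
    · exact div_le_one_of_le₀ (by linarith [hs.2]) hc.le
    · simpa only [div_div_eq_mul_div] using hu
  · obtain ⟨rfl, rfl⟩ := hB.2 ht
    have hc : -t < 0 := by linarith
    refine add_div_mul_mem_Icc hc.ne hlam ⟨?_, ?_⟩
      (mul_mem_Icc_of_neg (div_neg_of_neg_of_pos hc hd) ?_)
    · exact div_nonneg_of_nonpos (by linarith [hs.2]) hc.le
    · exact (div_le_one_of_neg hc).2 (by linarith [hs.1])
    · simpa only [div_div_eq_mul_div] using hu

theorem add_mul_sub_one_mul_mem_Icc {s v : K} (hs : s ∈ Set.Icc 0 1) (hv : |v| ≤ 1) :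
    s + s * (s - 1) * v ∈ Set.Icc 0 1 := by
  obtain ⟨hs₀, hs₁⟩ := hs
  obtain ⟨hv₁, hv₂⟩ := abs_le.1 hv
  have hw : 0 ≤ s * (1 - s) := mul_nonneg hs₀ (by linarith)
  have h₁ := mul_le_mul_of_nonneg_left hv₁ hw
  have h₂ := mul_le_mul_of_nonneg_left hv₂ hw
  constructor <;> nlinarith [sq_nonneg s, sq_nonneg (1 - s)]

end OrderedField

noncomputable def newtonTail (N : ℕ) (d t lam : ℕ → ℝ) (s : ℝ) (m : ℕ) : ℝ :=
  ∑ i ∈ Icc m N, lam i * ∏ k ∈ Icc (m + 1) i, (s - t k) / d k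

section NewtonTail

variable {N : ℕ} {d t lam : ℕ → ℝ} {s : ℝ}

theorem newtonTail_self : newtonTail N d t lam s N = lam N := by
  simp [newtonTail]

theorem newtonTail_of_lt {m : ℕ} (h : m < N) :
    newtonTail N d t lam s m =
      lam m + (s - t (m + 1)) / d (m + 1) * newtonTail N d t lam s (m + 1) := by
  rw [newtonTail, ← insert_Icc_add_one_left_eq_Icc h.le, sum_insert (by simp),
    Icc_eq_empty (by omega : ¬m + 1 ≤ m), prod_empty, mul_one, newtonTail, mul_sum]
  congr 1
  refine sum_congr rfl fun i hi => ?_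
  rw [← insert_Icc_add_one_left_eq_Icc (mem_Icc.1 hi).1, prod_insert (by simp)]
  ring

theorem Sn_eq_newtonTail (n : ℕ) :
    Sn n d t lam s = s + s * (s - 1) / d 1 * newtonTail (n - 1) d t lam s 1 := by
  rw [Sn, newtonTail, mul_sum]
  congr 1
  refine sum_congr rfl fun j hj => ?_
  rw [← insert_Icc_add_one_left_eq_Icc (mem_Icc.1 hj).1, prod_insert (by simp), prod_div_distrib]
  simp only [div_eq_mul_inv, mul_inv]
  ring

theorem newtonTail_mem_Icc {Bm Bp : ℕ → ℝ} (hs : s ∈ Set.Icc 0 1)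
    (hd : ∀ j, 1 ≤ j → j ≤ N → 0 < d j)
    (ht : ∀ j, 2 ≤ j → j ≤ N → t j ≤ 0 ∨ 1 ≤ t j)
    (hBrec : ∀ j, 2 ≤ j → j ≤ N →
      (t j ≤ 0 →
        Bm j = (Bm (j - 1) - lam (j - 1)) * d j / (1 - t j) ∧
        Bp j = (Bp (j - 1) - lam (j - 1)) * d j / (1 - t j)) ∧
      (1 ≤ t j →
        Bm j = (Bp (j - 1) - lam (j - 1)) * d j / (-t j) ∧
        Bp j = (Bm (j - 1) - lam (j - 1)) * d j / (-t j)))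
    (hlam : ∀ j, 1 ≤ j → j ≤ N → Bm j ≤ lam j ∧ lam j ≤ Bp j)
    {m : ℕ} (hm : 1 ≤ m) (hmN : m ≤ N) :
    newtonTail N d t lam s m ∈ Set.Icc (Bm m) (Bp m) := by
  induction hmN using Nat.decreasingInduction with
  | self => rw [newtonTail_self]; exact hlam N hm le_rfl
  | of_succ k hk ih =>
    have hB := hBrec (k + 1) (by omega) hk
    rw [Nat.add_sub_cancel] at hB
    rw [newtonTail_of_lt hk]
    exact newton_step_mem_Icc (hd _ (by omega) hk) hs (hlam k hm hk.le) (ht _ (by omega) hk) hB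
      (ih (by omega))

end NewtonTail

/-- Data-bounded recursion: if the scaled divided-difference ratios `λ̄_j` lie within the
recursively defined bounds `B_j^±` with data-bounded initialization `B_1^∓ = ∓d_1`, then
`0 ≤ S_n(s) ≤ 1` on `[0,1]`. -/
theorem dbi_Sn_bounds
    (n : ℕ) (hn : 2 ≤ n)
    (d t lam Bm Bp : ℕ → ℝ)
    (hd : ∀ j, 1 ≤ j → j ≤ n - 1 → 0 < d j)
    (ht : ∀ j, 2 ≤ j → j ≤ n - 1 → t j ≤ 0 ∨ 1 ≤ t j)
    (hBm1 : Bm 1 = -d 1)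
    (hBp1 : Bp 1 = d 1)
    (hBrec : ∀ j, 2 ≤ j → j ≤ n - 1 →
      (t j ≤ 0 →
        Bm j = (Bm (j - 1) - lam (j - 1)) * d j / (1 - t j) ∧
        Bp j = (Bp (j - 1) - lam (j - 1)) * d j / (1 - t j)) ∧
      (1 ≤ t j →
        Bm j = (Bp (j - 1) - lam (j - 1)) * d j / (-t j) ∧
        Bp j = (Bm (j - 1) - lam (j - 1)) * d j / (-t j)))
    (hlam : ∀ j, 1 ≤ j → j ≤ n - 1 → Bm j ≤ lam j ∧ lam j ≤ Bp j) :
    ∀ s ∈ Set.Icc (0 : ℝ) 1, 0 ≤ Sn n d t lam s ∧ Sn n d t lam s ≤ 1 := by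
  intro s hs
  have hN : 1 ≤ n - 1 := by omega
  have hd1 : 0 < d 1 := hd 1 le_rfl hN
  set U := newtonTail (n - 1) d t lam s 1
  have hU : U ∈ Set.Icc (-d 1) (d 1) := by
    rw [← hBm1, ← hBp1]
    exact newtonTail_mem_Icc hs hd ht hBrec hlam le_rfl hN
  have hv : |U / d 1| ≤ 1 := by
    rw [abs_div, abs_of_pos hd1, div_le_one hd1]
    exact abs_le.2 hU
  have hSn : Sn n d t lam s = s + s * (s - 1) * (U / d 1) := by
    rw [Sn_eq_newtonTail]
    ring
  rw [hSn]
  exact add_mul_sub_one_mul_mem_Icc hs hv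
end

section
/- Under the adaptive-stencil mesh setup, assume u_{i+1} ≠ u_i. Define the bound sequences by the data-bounded initialization B_1^− = −d_1 and B_1^+ = d_1, and for 2 ≤ j ≤ n−1: if t_j ≤ 0 then B_j^− = (B_{j−1}^− − λ̄_{j−1})·d_j/(1−t_j) and B_j^+ = (B_{j−1}^+ − λ̄_{j−1})·d_j/(1−t_j); if t_j ≥ 1 then B_j^− = (B_{j−1}^+ − λ̄_{j−1})·d_j/(−t_j) and B_j^+ = (B_{j−1}^− − λ̄_{j−1})·d_j/(−t_j). If B_j^− ≤ λ̄_j ≤ B_j^+ for every 1 ≤ j ≤ n−1, then for every x ∈ [x_i, x_{i+1}], min(u_i, u_{i+1}) ≤ U_n(x) ≤ max(u_i, u_{i+1}); i.e., the interpolant is bounded by the data values at the endpoints of the base interval. -/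
/-- Divided differences over consecutive nodes: `divdiff x u k m = U[x_k, …, x_{k+m}]`. -/
noncomputable def divdiff (x u : ℕ → ℝ) : ℕ → ℕ → ℝ
  | k, 0 => u k
  | k, m + 1 => (divdiff x u (k + 1) m - divdiff x u k m) / (x (k + m + 1) - x k)

/-- `stMin e j = min{e_0, …, e_j}`. -/
def stMin (e : ℕ → ℕ) (j : ℕ) : ℕ := (Finset.range (j + 1)).inf' Finset.nonempty_range_add_one e

/-- `stMax e j = max{e_0, …, e_j}`. -/
def stMax (e : ℕ → ℕ) (j : ℕ) : ℕ := (Finset.range (j + 1)).sup' Finset.nonempty_range_add_one e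

/-- `U[V_j]`: the divided difference over the consecutive nodes of the stencil
`V_j = {e_0, …, e_{j+1}}`, from its leftmost node `x_j^l` to its rightmost node `x_j^r`. -/
noncomputable def UV (x u : ℕ → ℝ) (e : ℕ → ℕ) (j : ℕ) : ℝ :=
  divdiff x u (stMin e (j + 1)) (stMax e (j + 1) - stMin e (j + 1))

/-- The Newton interpolant of degree `n` on the adaptive stencil:
`U_n(y) = u_i + Σ_{j=0}^{n−1} U[V_j] · Π_{k=0}^{j} (y − x_{e_k})`. -/
noncomputable def Un (x u : ℕ → ℝ) (e : ℕ → ℕ) (i n : ℕ) (y : ℝ) : ℝ :=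
  u i + ∑ j ∈ Finset.range n, UV x u e j * ∏ k ∈ Finset.range (j + 1), (y - x (e k))

/-- Normalized stencil width `d_j = (x_j^r − x_j^l)/(x_{i+1} − x_i)`. -/
noncomputable def dN (x : ℕ → ℝ) (e : ℕ → ℕ) (i j : ℕ) : ℝ :=
  (x (stMax e (j + 1)) - x (stMin e (j + 1))) / (x (i + 1) - x i)

/-- Normalized position `t_j = (x_{e_j} − x_i)/(x_{i+1} − x_i)` of the added stencil point. -/
noncomputable def tN (x : ℕ → ℝ) (e : ℕ → ℕ) (i j : ℕ) : ℝ :=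
  (x (e j) - x i) / (x (i + 1) - x i)

/-- Scaled divided-difference ratio
`λ̄_j = (U[V_j]/U[x_i, x_{i+1}]) · Π_{k=1}^{j} (x_k^r − x_k^l)`. -/
noncomputable def lamBar (x u : ℕ → ℝ) (e : ℕ → ℕ) (i j : ℕ) : ℝ :=
  (UV x u e j / divdiff x u i 1) *
    ∏ k ∈ Finset.Icc 1 j, (x (stMax e (k + 1)) - x (stMin e (k + 1)))

/-!
Put `h = x_{i+1} - x_i` and `y = x_i + h s` with `s ∈ [0, 1]`. Since `y - x_{e_k} = h (s - t_k)`
with `t_0 = 0`, `t_1 = 1`, the Newton form becomes `U_n(y) = u_i + (u_{i+1} - u_i) S_n(s)` with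
`S_n(s) = s + s (s - 1) Q(s)`, where `Q(s) = c_1 + (s - t_2)(c_2 + (s - t_3)(⋯ c_{n-1}))` is a
nested Horner sum with coefficients `c_j = λ̄_j / (d_1 ⋯ d_j)`.

Divided by `d_1 ⋯ d_j`, the recursion for `B_j^±` reads `β_j^- = c_j + (1 - t_{j+1}) β_{j+1}^-`
(and alike) when `t_{j+1} ≤ 0`, and `β_j^- = c_j - t_{j+1} β_{j+1}^+` when `t_{j+1} ≥ 1`. The
stencil grows outwards, so `t_{j+1} ∉ (0, 1)` and the factor `s - t_{j+1}` has a fixed sign and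
modulus at most `|1 - t_{j+1}|`, resp. `t_{j+1}`; moreover `β_j^- ≤ c_j ≤ β_j^+` forces
`β_{j+1}^- ≤ 0 ≤ β_{j+1}^+`. Hence each Horner layer maps `[β_{j+1}^-, β_{j+1}^+]` into
`[β_j^-, β_j^+]`, and by downward induction `Q(s) ∈ [β_1^-, β_1^+] = [-1, 1]`. Then
`s² ≤ S_n(s) ≤ s (2 - s)`, so `S_n(s) ∈ [0, 1]` and `U_n(y)` is a convex combination of `u_i`
and `u_{i+1}`.
-/

open Finset

noncomputable def newtonHorner (c t : ℕ → ℝ) (s : ℝ) : ℕ → ℕ → ℝ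
  | m, 0 => c m
  | m, q + 1 => c m + (s - t (m + 1)) * newtonHorner c t s (m + 1) q

theorem sum_Icc_mul_prod_eq_newtonHorner (c t : ℕ → ℝ) (s : ℝ) (q m : ℕ) :
    ∑ j ∈ Icc m (m + q), c j * ∏ k ∈ Icc (m + 1) j, (s - t k) = newtonHorner c t s m q := by
  induction q generalizing m with
  | zero => simp [newtonHorner]
  | succ q ih =>
    rw [newtonHorner, ← ih (m + 1), mul_sum, ← insert_Icc_add_one_left_eq_Icc (by omega),
      sum_insert (by simp), Icc_eq_empty_of_lt (Nat.lt_succ_self m), prod_empty, mul_one,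
      show m + (q + 1) = m + 1 + q by omega]
    congr 1
    refine sum_congr rfl fun j hj => ?_
    rw [← insert_Icc_add_one_left_eq_Icc (mem_Icc.1 hj).1, prod_insert (by simp)]
    ring

-- The recursion for `B_j^±`, divided by `d_1 ⋯ d_j` and solved for the bounds at `j`.
def IsBoundStep (c τ bm bp bm' bp' : ℝ) : Prop :=
  τ ≤ 0 ∧ bm = c + (1 - τ) * bm' ∧ bp = c + (1 - τ) * bp' ∨
    1 ≤ τ ∧ bm = c - τ * bp' ∧ bp = c - τ * bm'

theorem mul_mem_Icc_of_le {r R a b p : ℝ} (hr : 0 ≤ r) (hrR : r ≤ R) (ha : a ≤ 0)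
    (hb : 0 ≤ b) (hp : p ∈ Set.Icc a b) : r * p ∈ Set.Icc (R * a) (R * b) := by
  obtain ⟨hpa, hpb⟩ := hp
  constructor <;> nlinarith

theorem IsBoundStep.add_mul_mem_Icc {c τ bm bp bm' bp' s p : ℝ}
    (h : IsBoundStep c τ bm bp bm' bp') (hc : c ∈ Set.Icc bm bp) (hs : s ∈ Set.Icc 0 1)
    (hp : p ∈ Set.Icc bm' bp') : c + (s - τ) * p ∈ Set.Icc bm bp := by
  obtain ⟨hs0, hs1⟩ := hs
  obtain ⟨hcm, hcp⟩ := hc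
  rcases h with ⟨hτ, rfl, rfl⟩ | ⟨hτ, rfl, rfl⟩
  · have hbm' : bm' ≤ 0 := by nlinarith
    have hbp' : 0 ≤ bp' := by nlinarith
    have := mul_mem_Icc_of_le (by linarith : 0 ≤ s - τ) (by linarith : s - τ ≤ 1 - τ)
      hbm' hbp' hp
    exact ⟨by linarith [this.1], by linarith [this.2]⟩
  · have hbm' : bm' ≤ 0 := by nlinarith
    have hbp' : 0 ≤ bp' := by nlinarith
    have := mul_mem_Icc_of_le (by linarith : 0 ≤ τ - s) (by linarith : τ - s ≤ τ)
      (neg_nonpos.2 hbp') (neg_nonneg.2 hbm') ⟨neg_le_neg hp.2, neg_le_neg hp.1⟩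
    exact ⟨by linarith [this.1], by linarith [this.2]⟩

theorem newtonHorner_mem_Icc {c t bm bp : ℕ → ℝ} {s : ℝ} (hs : s ∈ Set.Icc 0 1)
    (q m : ℕ)
    (hc : ∀ j, m ≤ j → j ≤ m + q → c j ∈ Set.Icc (bm j) (bp j))
    (hstep : ∀ j, m ≤ j → j < m + q →
      IsBoundStep (c j) (t (j + 1)) (bm j) (bp j) (bm (j + 1)) (bp (j + 1))) :
    newtonHorner c t s m q ∈ Set.Icc (bm m) (bp m) := by
  induction q generalizing m with
  | zero => exact hc m le_rfl le_rfl
  | succ q ih =>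
    exact (hstep m le_rfl (by omega)).add_mul_mem_Icc (hc m le_rfl (by omega)) hs
      (ih (m + 1) (fun j h₁ h₂ => hc j (by omega) (by omega))
        (fun j h₁ h₂ => hstep j (by omega) (by omega)))

theorem isBoundStep_div {lam τ d D bm bp bm' bp' : ℝ} (hd : d ≠ 0) (hD : D ≠ 0)
    (hτ : τ ≤ 0 ∨ 1 ≤ τ)
    (h₀ : τ ≤ 0 → bm' = (bm - lam) * d / (1 - τ) ∧ bp' = (bp - lam) * d / (1 - τ))
    (h₁ : 1 ≤ τ → bm' = (bp - lam) * d / (-τ) ∧ bp' = (bm - lam) * d / (-τ)) :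
    IsBoundStep (lam / D) τ (bm / D) (bp / D) (bm' / (D * d)) (bp' / (D * d)) := by
  rcases hτ with hτ | hτ
  · obtain ⟨rfl, rfl⟩ := h₀ hτ
    have : 1 - τ ≠ 0 := by linarith
    refine Or.inl ⟨hτ, ?_, ?_⟩ <;> field_simp <;> ring
  · obtain ⟨rfl, rfl⟩ := h₁ hτ
    have : τ ≠ 0 := by linarith
    refine Or.inr ⟨hτ, ?_, ?_⟩ <;> field_simp <;> ring

theorem Sn_eq_add_mul_newtonHorner {n : ℕ} (hn : 2 ≤ n) (d t lam : ℕ → ℝ) (s : ℝ) :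
    Sn n d t lam s =
      s + s * (s - 1) * newtonHorner (fun j => lam j / ∏ k ∈ Icc 1 j, d k) t s 1 (n - 2) := by
  rw [Sn, ← sum_Icc_mul_prod_eq_newtonHorner, show 1 + (n - 2) = n - 1 by omega, mul_sum]
  congr 1
  exact sum_congr rfl fun j _ => by ring

theorem newtonHorner_mem_Icc_neg_one_one {n : ℕ} (hn : 2 ≤ n) {d t lam Bm Bp : ℕ → ℝ}
    (hd : ∀ k, 1 ≤ k → k < n → 0 < d k) (ht : ∀ j, 2 ≤ j → j < n → t j ≤ 0 ∨ 1 ≤ t j)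
    (hBm1 : Bm 1 = -d 1) (hBp1 : Bp 1 = d 1)
    (hBrec : ∀ j, 2 ≤ j → j ≤ n - 1 →
      (t j ≤ 0 →
        Bm j = (Bm (j - 1) - lam (j - 1)) * d j / (1 - t j) ∧
        Bp j = (Bp (j - 1) - lam (j - 1)) * d j / (1 - t j)) ∧
      (1 ≤ t j →
        Bm j = (Bp (j - 1) - lam (j - 1)) * d j / (-t j) ∧
        Bp j = (Bm (j - 1) - lam (j - 1)) * d j / (-t j)))
    (hlam : ∀ j, 1 ≤ j → j ≤ n - 1 → Bm j ≤ lam j ∧ lam j ≤ Bp j)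
    {s : ℝ} (hs : s ∈ Set.Icc 0 1) :
    newtonHorner (fun j => lam j / ∏ k ∈ Icc 1 j, d k) t s 1 (n - 2) ∈ Set.Icc (-1) 1 := by
  have hD : ∀ j, j < n → 0 < ∏ k ∈ Icc 1 j, d k := fun j hj =>
    prod_pos fun k hk => hd k (mem_Icc.1 hk).1 (by grind)
  have hQ := newtonHorner_mem_Icc (t := t) hs (n - 2) 1
    (c := fun j => lam j / ∏ k ∈ Icc 1 j, d k)
    (bm := fun j => Bm j / ∏ k ∈ Icc 1 j, d k)
    (bp := fun j => Bp j / ∏ k ∈ Icc 1 j, d k)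
    (fun j hj hjn => ⟨div_le_div_of_nonneg_right (hlam j hj (by omega)).1 (hD j (by omega)).le,
      div_le_div_of_nonneg_right (hlam j hj (by omega)).2 (hD j (by omega)).le⟩)
    (fun j hj hjn => by
      rw [prod_Icc_succ_top (by omega)]
      exact isBoundStep_div (hd (j + 1) (by omega) (by omega)).ne' (hD j (by omega)).ne'
        (ht (j + 1) (by omega) (by omega))
        (hBrec (j + 1) (by omega) (by omega)).1 (hBrec (j + 1) (by omega) (by omega)).2)
  simpa [hBm1, hBp1, neg_div, div_self (hd 1 le_rfl (by omega)).ne'] using hQ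

theorem add_mul_mul_sub_one_mem_Icc {s q : ℝ} (hs : s ∈ Set.Icc 0 1)
    (hq : q ∈ Set.Icc (-1) 1) :
    s + s * (s - 1) * q ∈ Set.Icc 0 1 := by
  obtain ⟨hs0, hs1⟩ := hs
  obtain ⟨hq0, hq1⟩ := hq
  have : 0 ≤ s * (1 - s) := mul_nonneg hs0 (by linarith)
  constructor <;> nlinarith

theorem stMin_le (e : ℕ → ℕ) {j k : ℕ} (hk : k ≤ j) : stMin e j ≤ e k :=
  inf'_le e (mem_range.2 (by omega))

theorem le_stMax (e : ℕ → ℕ) {j k : ℕ} (hk : k ≤ j) : e k ≤ stMax e j :=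
  le_sup' e (mem_range.2 (by omega))

theorem stMax_le {e : ℕ → ℕ} {j N : ℕ} (h : ∀ k ≤ j, e k ≤ N) : stMax e j ≤ N :=
  sup'_le _ _ fun k hk => h k (by simpa [Nat.lt_succ_iff] using hk)

theorem UV_zero {x u : ℕ → ℝ} {e : ℕ → ℕ} (he : e 1 = e 0 + 1) :
    UV x u e 0 = divdiff x u (e 0) 1 := by
  have hmin : stMin e 1 = e 0 := by simp [stMin, range_add_one, he]
  have hmax : stMax e 1 = e 0 + 1 := by simp [stMax, range_add_one, he]
  simp [UV, hmin, hmax]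

theorem stencil_width_pos {N j : ℕ} {x : ℕ → ℝ} {e : ℕ → ℕ}
    (hx : StrictMonoOn x (Set.Iic N))
    (he : e 0 < e 1) (hj : 1 ≤ j) (heN : ∀ k ≤ j, e k ≤ N) :
    0 < x (stMax e j) - x (stMin e j) := by
  have hlt : stMin e j < stMax e j :=
    (stMin_le e (Nat.zero_le j)).trans_lt (he.trans_le (le_stMax e hj))
  have hmax := stMax_le heN
  exact sub_pos.2 (hx (Set.mem_Iic.2 (by omega)) (Set.mem_Iic.2 hmax) hlt)

theorem tN_nonpos_or_one_le {N i j : ℕ} {x : ℕ → ℝ} {e : ℕ → ℕ}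
    (hx : StrictMonoOn x (Set.Iic N))
    (hiN : i + 1 ≤ N) (he0 : e 0 = i) (he1 : e 1 = i + 1) (hj : 2 ≤ j) (hej : e j ≤ N)
    (hstep : e j + 1 = stMin e (j - 1) ∨ e j = stMax e (j - 1) + 1) :
    tN x e i j ≤ 0 ∨ 1 ≤ tN x e i j := by
  have hh : 0 < x (i + 1) - x i :=
    sub_pos.2 (hx (Set.mem_Iic.2 (by omega)) (Set.mem_Iic.2 hiN) (Nat.lt_succ_self i))
  rcases hstep with h | h
  · have hlt : e j < i := by have := stMin_le e (Nat.zero_le (j - 1)); omega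
    have := hx (Set.mem_Iic.2 hej) (Set.mem_Iic.2 (by omega)) hlt
    exact Or.inl (div_nonpos_of_nonpos_of_nonneg (by linarith) hh.le)
  · have hlt : i + 1 < e j := by have := le_stMax e (show 1 ≤ j - 1 by omega); omega
    have := hx (Set.mem_Iic.2 hiN) (Set.mem_Iic.2 hej) hlt
    exact Or.inr ((one_le_div hh).2 (by linarith))

section NormalizedForm

variable {x u : ℕ → ℝ} {e : ℕ → ℕ} {i : ℕ}

theorem sub_eq_mul_sub_tN (hh : x (i + 1) - x i ≠ 0) (s : ℝ) (k : ℕ) :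
    x i + (x (i + 1) - x i) * s - x (e k) = (x (i + 1) - x i) * (s - tN x e i k) := by
  rw [tN, mul_sub, mul_div_cancel₀ _ hh]
  ring

theorem prod_range_sub_eq (he0 : e 0 = i) (he1 : e 1 = i + 1) (hh : x (i + 1) - x i ≠ 0)
    (s : ℝ) {j : ℕ} (hj : 1 ≤ j) :
    ∏ k ∈ range (j + 1), (x i + (x (i + 1) - x i) * s - x (e k)) =
      (x (i + 1) - x i) ^ (j + 1) * (s * (s - 1) * ∏ k ∈ Icc 2 j, (s - tN x e i k)) := by
  have ht0 : tN x e i 0 = 0 := by simp [tN, he0]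
  have ht1 : tN x e i 1 = 1 := by rw [tN, he1, div_self hh]
  rw [prod_congr rfl fun k _ => sub_eq_mul_sub_tN hh s k, prod_mul_distrib, prod_const,
    card_range, show range (j + 1) = insert 0 (insert 1 (Icc 2 j)) by ext; simp; omega,
    prod_insert (by simp), prod_insert (by simp), ht0, ht1]
  ring

theorem lamBar_div_prod_dN (hu : u (i + 1) ≠ u i) {j : ℕ}
    (hw : ∀ k ∈ Icc 1 j, x (stMax e (k + 1)) - x (stMin e (k + 1)) ≠ 0) :
    lamBar x u e i j / ∏ k ∈ Icc 1 j, dN x e i k =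
      UV x u e j * (x (i + 1) - x i) ^ (j + 1) / (u (i + 1) - u i) := by
  have hW := prod_ne_zero_iff.2 hw
  have hΔ : u (i + 1) - u i ≠ 0 := sub_ne_zero.2 hu
  simp only [lamBar, dN, prod_div_distrib, prod_const, Nat.card_Icc, add_tsub_cancel_right]
  simp only [divdiff, add_zero]
  field_simp
  ring

theorem Un_eq_add_mul_Sn (he0 : e 0 = i) (he1 : e 1 = i + 1) (hh : x (i + 1) - x i ≠ 0)
    (hu : u (i + 1) ≠ u i) {n : ℕ} (hn : 1 ≤ n)
    (hw : ∀ k, 1 ≤ k → k < n → x (stMax e (k + 1)) - x (stMin e (k + 1)) ≠ 0) (s : ℝ) :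
    Un x u e i n (x i + (x (i + 1) - x i) * s) =
      u i + (u (i + 1) - u i) * Sn n (dN x e i) (tN x e i) (lamBar x u e i) s := by
  have hUV0 : UV x u e 0 = (u (i + 1) - u i) / (x (i + 1) - x i) := by
    rw [UV_zero (he1.trans (congrArg (· + 1) he0.symm)), he0]
    simp [divdiff]
  rw [Un, Sn, show range n = insert 0 (Icc 1 (n - 1)) by ext; simp; omega,
    sum_insert (by simp), mul_add, mul_sum]
  congr 1
  have hlin : UV x u e 0 * ∏ k ∈ range (0 + 1), (x i + (x (i + 1) - x i) * s - x (e k)) =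
      (u (i + 1) - u i) * s := by
    rw [zero_add, prod_range_one, he0, hUV0]
    field_simp
    ring
  rw [hlin]
  congr 1
  refine sum_congr rfl fun j hj => ?_
  obtain ⟨hj1, hjn⟩ := mem_Icc.1 hj
  rw [prod_range_sub_eq he0 he1 hh s hj1,
    lamBar_div_prod_dN hu fun k hk => hw k (mem_Icc.1 hk).1 (by grind)]
  field_simp [sub_ne_zero.2 hu]

end NormalizedForm

/-- Data-bounded interpolation theorem on the adaptive stencil: if the scaled
divided-difference ratios satisfy the recursive bounds with data-bounded initialization
`B_1^∓ = ∓d_1`, then the interpolant is bounded by the data values at the endpoints of the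
base interval. -/
theorem dbi_interpolant_bounds
    (N n i : ℕ) (hn : 2 ≤ n) (hiN : i + 1 ≤ N)
    (x u : ℕ → ℝ)
    (hx : ∀ k, k < N → x k < x (k + 1))
    (e : ℕ → ℕ)
    (he0 : e 0 = i) (he1 : e 1 = i + 1)
    (heN : ∀ j, j ≤ n → e j ≤ N)
    (heStep : ∀ j, 2 ≤ j → j ≤ n →
      e j + 1 = stMin e (j - 1) ∨ e j = stMax e (j - 1) + 1)
    (hu : u (i + 1) ≠ u i)
    (Bm Bp : ℕ → ℝ)
    (hBm1 : Bm 1 = -dN x e i 1)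
    (hBp1 : Bp 1 = dN x e i 1)
    (hBrec : ∀ j, 2 ≤ j → j ≤ n - 1 →
      (tN x e i j ≤ 0 →
        Bm j = (Bm (j - 1) - lamBar x u e i (j - 1)) * dN x e i j / (1 - tN x e i j) ∧
        Bp j = (Bp (j - 1) - lamBar x u e i (j - 1)) * dN x e i j / (1 - tN x e i j)) ∧
      (1 ≤ tN x e i j →
        Bm j = (Bp (j - 1) - lamBar x u e i (j - 1)) * dN x e i j / (-tN x e i j) ∧
        Bp j = (Bm (j - 1) - lamBar x u e i (j - 1)) * dN x e i j / (-tN x e i j)))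
    (hlam : ∀ j, 1 ≤ j → j ≤ n - 1 →
      Bm j ≤ lamBar x u e i j ∧ lamBar x u e i j ≤ Bp j)
    :
    ∀ y ∈ Set.Icc (x i) (x (i + 1)),
      min (u i) (u (i + 1)) ≤ Un x u e i n y ∧
        Un x u e i n y ≤ max (u i) (u (i + 1)) := by
  intro y ⟨hyi, hyi1⟩
  have hmono : StrictMonoOn x (Set.Iic N) := strictMonoOn_Iic_of_lt_succ hx
  have hh : 0 < x (i + 1) - x i := sub_pos.2 (hx i (by omega))
  have hw : ∀ k, 1 ≤ k → k < n → 0 < x (stMax e (k + 1)) - x (stMin e (k + 1)) :=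
    fun k hk hkn => stencil_width_pos hmono (by omega) (by omega) fun m hm => heN m (by omega)
  set s := (y - x i) / (x (i + 1) - x i)
  have hs : s ∈ Set.Icc 0 1 :=
    ⟨div_nonneg (by linarith) hh.le, (div_le_one hh).2 (by linarith)⟩
  have hQ := newtonHorner_mem_Icc_neg_one_one hn (fun k hk hkn => div_pos (hw k hk hkn) hh)
    (fun j hj hjn => tN_nonpos_or_one_le hmono hiN he0 he1 hj (heN j hjn.le) (heStep j hj hjn.le))
    hBm1 hBp1 hBrec hlam hs
  have hy : x i + (x (i + 1) - x i) * s = y := by rw [mul_div_cancel₀ _ hh.ne']; ring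
  rw [← hy, Un_eq_add_mul_Sn he0 he1 hh.ne' hu (by omega) (fun k hk hkn => (hw k hk hkn).ne'),
    Sn_eq_add_mul_newtonHorner hn]
  have hS := add_mul_mul_sub_one_mem_Icc hs hQ
  have hmem := segment_subset_uIcc (u i) (u (i + 1)) (lineMap_mem_segment ℝ (u i) (u (i + 1)) hS)
  rwa [AffineMap.lineMap_apply_ring', mul_comm, add_comm _ (u i)] at hmem
end
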